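/- In the D-WCCM formulation, suppose $(\{\mathbf{y}^{(k)}\}, \mathbf{u}, \{\mathbf{v}^{(k)}\})$ is feasible and suppose tag $j$ is selected by two distinct groups, i.e., $\mathbf{y}^{(k)}_j = \mathbf{y}^{(l)}_j = 1$ with $k \ne l$. Then every outlier in group $k$ that has tag $j$ must have $\mathbf{v}^{(k)}_i = 1$ (it is counted as ignored), and likewise for group $l$. Consequently, replacing $\mathbf{y}^{(l)}_j$ by $0$ yields a feasible solution with objective value no larger, so some optimal solution of D-WCCM has pairwise disjoint descriptions. -/

import Mathlib

/-! A tag `j` used by two descriptions `Y k`, `Y l` already forces, through the R-NECE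
constraint, every outlier of either group carrying `j` to be ignored. Hence a tag may be
dropped from a description whenever another description still uses it: coverage of an
outlier is only lost where its `v`-entry is already `1`, and shrinking descriptions never
tightens R-NECE. Dropping all shared tags at once keeps `(u, v)`, hence the objective, and
leaves pairwise disjoint descriptions. -/

open Finset

variable {ι τ : Type*} [DecidableEq ι] [DecidableEq τ]

/-- Feasibility of a D-WCCM solution in set form: `Y k` is the description of group
`k`, `u i = 1` marks covered (ignored) normal instances, `v k m = 1` marks ignored
outliers of group `k`.  R-SUFF: every outlier of group `k` is covered by `Y k` or
ignored; R-NECE: normal instances covered by some description are marked in `u`, and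
outliers of group `k` covered by another group's description are marked in `v k`. -/
def DWCCMFeasible (K : ℕ) (𝒩 : Finset ι) (𝒪 : Fin K → Finset ι) (T : ι → Finset τ)
    (Y : Fin K → Finset τ) (u : ι → ℕ) (v : Fin K → ι → ℕ) : Prop :=
  (∀ k, ∀ m ∈ 𝒪 k, (T m ∩ Y k).Nonempty ∨ v k m = 1) ∧
  (∀ k, ∀ i ∈ 𝒩, (T i ∩ Y k).Nonempty → u i = 1) ∧
  (∀ k l, k ≠ l → ∀ m ∈ 𝒪 k, (T m ∩ Y l).Nonempty → v k m = 1)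

/-- D-WCCM objective `|u| + ∑ₖ λ⁽ᵏ⁾ |v⁽ᵏ⁾|`. -/
def DWCCMObj (K : ℕ) (𝒩 : Finset ι) (𝒪 : Fin K → Finset ι) (lam : Fin K → ℝ)
    (u : ι → ℕ) (v : Fin K → ι → ℕ) : ℝ :=
  ((𝒩.filter (fun i => u i = 1)).card : ℝ)
    + ∑ k, lam k * (((𝒪 k).filter (fun m => v k m = 1)).card : ℝ)

section ExclusiveTags

variable {κ : Type*} [Fintype κ] [DecidableEq κ]

def exclusiveTags (Y : κ → Finset τ) (k : κ) : Finset τ :=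
  (Y k).filter fun t => ∀ l, l ≠ k → t ∉ Y l

theorem exclusiveTags_subset (Y : κ → Finset τ) (k : κ) : exclusiveTags Y k ⊆ Y k :=
  filter_subset _ _

theorem exclusiveTags_pairwise_disjoint (Y : κ → Finset τ) :
    Pairwise (Function.onFun Disjoint (exclusiveTags Y)) := by
  intro k l hkl
  refine disjoint_left.2 fun t htk htl => ?_
  exact (mem_filter.1 htk).2 l hkl.symm (exclusiveTags_subset Y l htl)

theorem exists_shared_of_notMem_exclusiveTags {Y : κ → Finset τ} {k : κ} {t : τ}
    (ht : t ∈ Y k) (hnot : t ∉ exclusiveTags Y k) :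
    ∃ l, l ≠ k ∧ t ∈ Y l := by
  simpa [exclusiveTags, ht] using hnot

end ExclusiveTags

namespace DWCCMFeasible

omit [DecidableEq ι]

variable {K : ℕ} {𝒩 : Finset ι} {𝒪 : Fin K → Finset ι} {T : ι → Finset τ}
  {Y : Fin K → Finset τ} {u : ι → ℕ} {v : Fin K → ι → ℕ}

theorem v_eq_one_of_mem_tag (hfeas : DWCCMFeasible K 𝒩 𝒪 T Y u v) {k l : Fin K}
    (hkl : k ≠ l) {m : ι} (hm : m ∈ 𝒪 k) {j : τ} (hjm : j ∈ T m) (hjl : j ∈ Y l) :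
    v k m = 1 :=
  hfeas.2.2 k l hkl m hm ⟨j, mem_inter.2 ⟨hjm, hjl⟩⟩

theorem of_subset_of_shared (hfeas : DWCCMFeasible K 𝒩 𝒪 T Y u v)
    {Y' : Fin K → Finset τ} (hsub : ∀ k, Y' k ⊆ Y k)
    (hshared : ∀ k, ∀ t ∈ Y k, t ∉ Y' k → ∃ l, l ≠ k ∧ t ∈ Y l) :
    DWCCMFeasible K 𝒩 𝒪 T Y' u v := by
  obtain ⟨hsuff, hnormal, hcross⟩ := hfeas
  refine ⟨fun k m hm => ?_, fun k i hi hcov => hnormal k i hi ?_,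
    fun k l hkl m hm hcov => hcross k l hkl m hm ?_⟩
  · rcases hsuff k m hm with ⟨t, ht⟩ | hv
    · rw [mem_inter] at ht
      by_cases htk : t ∈ Y' k
      · exact Or.inl ⟨t, mem_inter.2 ⟨ht.1, htk⟩⟩
      · obtain ⟨l, hlk, htl⟩ := hshared k t ht.2 htk
        exact Or.inr (hcross k l hlk.symm m hm ⟨t, mem_inter.2 ⟨ht.1, htl⟩⟩)
    · exact Or.inr hv
  · exact hcov.mono (inter_subset_inter subset_rfl (hsub k))
  · exact hcov.mono (inter_subset_inter subset_rfl (hsub l))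

theorem update_sdiff_singleton (hfeas : DWCCMFeasible K 𝒩 𝒪 T Y u v) {k l : Fin K}
    (hkl : k ≠ l) {j : τ} (hjk : j ∈ Y k) :
    DWCCMFeasible K 𝒩 𝒪 T (Function.update Y l (Y l \ {j})) u v := by
  refine hfeas.of_subset_of_shared (fun k' => ?_) (fun k' t ht hnot => ?_)
  · rcases eq_or_ne k' l with rfl | hk'
    · simp
    · simp [hk']
  · rcases eq_or_ne k' l with rfl | hk'
    · obtain rfl : t = j := by simpa [ht] using hnot
      exact ⟨k, hkl, hjk⟩
    · simp [hk', ht] at hnot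

theorem exclusiveTags (hfeas : DWCCMFeasible K 𝒩 𝒪 T Y u v) :
    DWCCMFeasible K 𝒩 𝒪 T (exclusiveTags Y) u v :=
  hfeas.of_subset_of_shared (exclusiveTags_subset Y) fun _ _ ht hnot =>
    exists_shared_of_notMem_exclusiveTags ht hnot

end DWCCMFeasible

theorem dwccm_disjoint_wlog_general
    (K : ℕ) (𝒩 : Finset ι) (𝒪 : Fin K → Finset ι) (T : ι → Finset τ)
    (lam : Fin K → ℝ)
    (Y : Fin K → Finset τ) (u : ι → ℕ) (v : Fin K → ι → ℕ)
    (hfeas : DWCCMFeasible K 𝒩 𝒪 T Y u v)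
    (k l : Fin K) (hkl : k ≠ l) (j : τ) (hjk : j ∈ Y k) (hjl : j ∈ Y l) :
    (∀ m ∈ 𝒪 k, j ∈ T m → v k m = 1) ∧
    (∀ m ∈ 𝒪 l, j ∈ T m → v l m = 1) ∧
    DWCCMFeasible K 𝒩 𝒪 T (Function.update Y l (Y l \ {j})) u v ∧
    DWCCMObj K 𝒩 𝒪 lam u v ≤ DWCCMObj K 𝒩 𝒪 lam u v ∧
    (∃ (Y' : Fin K → Finset τ) (u' : ι → ℕ) (v' : Fin K → ι → ℕ),
      DWCCMFeasible K 𝒩 𝒪 T Y' u' v' ∧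
      DWCCMObj K 𝒩 𝒪 lam u' v' ≤ DWCCMObj K 𝒩 𝒪 lam u v ∧
      ∀ k' l', k' ≠ l' → Disjoint (Y' k') (Y' l')) :=
  ⟨fun _ hm hjm => hfeas.v_eq_one_of_mem_tag hkl hm hjm hjl,
    fun _ hm hjm => hfeas.v_eq_one_of_mem_tag hkl.symm hm hjm hjk,
    hfeas.update_sdiff_singleton hkl hjk, le_rfl,
    ⟨exclusiveTags Y, u, v, hfeas.exclusiveTags, le_rfl, exclusiveTags_pairwise_disjoint Y⟩⟩

/-- If a feasible D-WCCM solution selects tag `j` in two distinct groups `k ≠ l`,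
then every outlier of group `k` carrying tag `j` is ignored (`v k m = 1`), removing
`j` from `Y l` preserves feasibility without increasing the objective, and therefore
some solution at least as good as `(Y,u,v)` has pairwise disjoint descriptions. -/
theorem dwccm_disjoint_wlog
    (K : ℕ) (𝒩 : Finset ι) (𝒪 : Fin K → Finset ι) (T : ι → Finset τ)
    (lam : Fin K → ℝ) (hlam : ∀ k, 1 ≤ lam k)
    (Y : Fin K → Finset τ) (u : ι → ℕ) (v : Fin K → ι → ℕ)
    (hfeas : DWCCMFeasible K 𝒩 𝒪 T Y u v)
    (k l : Fin K) (hkl : k ≠ l) (j : τ) (hjk : j ∈ Y k) (hjl : j ∈ Y l) :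
    (∀ m ∈ 𝒪 k, j ∈ T m → v k m = 1) ∧
    (∀ m ∈ 𝒪 l, j ∈ T m → v l m = 1) ∧
    DWCCMFeasible K 𝒩 𝒪 T (Function.update Y l (Y l \ {j})) u v ∧
    DWCCMObj K 𝒩 𝒪 lam u v ≤ DWCCMObj K 𝒩 𝒪 lam u v ∧
    (∃ (Y' : Fin K → Finset τ) (u' : ι → ℕ) (v' : Fin K → ι → ℕ),
      DWCCMFeasible K 𝒩 𝒪 T Y' u' v' ∧
      DWCCMObj K 𝒩 𝒪 lam u' v' ≤ DWCCMObj K 𝒩 𝒪 lam u v ∧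
      ∀ k' l', k' ≠ l' → Disjoint (Y' k') (Y' l')) :=
  dwccm_disjoint_wlog_general K 𝒩 𝒪 T lam Y u v hfeas k l hkl j hjk hjl
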